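/- Let D be a self-adjoint operator on H and a ∈ B(H) be weakly D-differentiable. Then the ultraweak (equivalently, weak-operator, since the family is bounded) limit of (α_t(a) − a)/(it) as t → 0 exists and equals wD(a); in particular, for all μ, ν ∈ H, the function t ↦ ⟨α_t(a) μ, ν⟩ is differentiable at t = 0 with derivative i⟨wD(a) μ, ν⟩. -/

import Mathlib

/-!
For `ξ, η ∈ dom D` the function `s ↦ ⟪η, α_s(a) ξ⟫ = ⟪U(-s) η, a (U(-s) ξ)⟫` is differentiable
everywhere with derivative `i ⟪η, α_s(b) ξ⟫`: at `s = 0` this is the weak-derivative identity,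
and the general case reduces to it because `U(-s)` preserves `dom D`. The mean value theorem then
bounds the difference quotients `⟪η, (α_t(a) - a)/(it) ξ⟫` by `‖b‖ ‖ξ‖ ‖η‖`, and by density
this bound holds on all of `H`. Uniform boundedness makes the coefficients `⟪y, T_t x⟫` of the
difference quotients equicontinuous in `x` and in `y`, so their convergence on `dom D` propagates to
all of `H`; the derivative claim is the same limit read as a slope.
-/

open Complex Filter Topology MeasureTheory
open scoped Topology

local notation "⟪" x ", " y "⟫" => @inner ℂ _ _ x y

variable {H : Type*} [NormedAddCommGroup H] [InnerProductSpace ℂ H] [CompleteSpace H]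

/-- `b` is the bounded operator implementing the commutator form
`(ξ, η) ↦ ⟨aξ, Dη⟩ − ⟨aDξ, η⟩` on `dom D × dom D`; i.e. `a` is weakly `D`-differentiable
with derivative `wD(a) = b`. -/
def IsWeakDeriv (D : H →ₗ.[ℂ] H) (a b : H →L[ℂ] H) : Prop :=
  ∀ ξ η : D.domain, ⟪b (ξ : H), (η : H)⟫ = ⟪a (ξ : H), D η⟫ - ⟪a (D ξ), (η : H)⟫

/-- `conjAd U t a = U t ∘ a ∘ U (−t)`, i.e. `α_t(a) = e^{itD} a e^{-itD}`. -/
noncomputable def conjAd (U : ℝ → H →L[ℂ] H) (t : ℝ) (a : H →L[ℂ] H) : H →L[ℂ] H :=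
  (U t).comp (a.comp (U (-t)))

/-- `U` is the strongly continuous one-parameter unitary group `t ↦ e^{itD}`
generated by the self-adjoint operator `D` (Stone's theorem characterization). -/
structure IsStoneGroupOf (D : H →ₗ.[ℂ] H) (U : ℝ → H →L[ℂ] H) : Prop where
  map_zero : U 0 = 1
  map_add : ∀ s t : ℝ, U (s + t) = (U s).comp (U t)
  isometry : ∀ (t : ℝ) (ξ : H), ‖U t ξ‖ = ‖ξ‖
  hasDerivAt : ∀ ξ : D.domain, HasDerivAt (fun t : ℝ => U t (ξ : H)) (Complex.I • D ξ) 0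
  mem_domain : ∀ ξ v : H, HasDerivAt (fun t : ℝ => U t ξ) v 0 → ξ ∈ D.domain

theorem Equicontinuous.tendsto_of_dense {ι X α : Type*} [TopologicalSpace X] [UniformSpace α]
    {l : Filter ι} {F : ι → X → α} {f : X → α} (hF : Equicontinuous F) (hf : Continuous f)
    {s : Set X} (hs : Dense s) (h : ∀ x ∈ s, Tendsto (F · x) l (𝓝 (f x))) (x : X) :
    Tendsto (F · x) l (𝓝 (f x)) :=
  (hF.isClosed_setOfPred_tendsto hf).closure_subset_iff.2 h (hs x)

theorem ContinuousLinearMap.tendsto_inner_of_dense {𝕜 E F ι : Type*} [RCLike 𝕜]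
    [SeminormedAddCommGroup E] [NormedSpace 𝕜 E] [NormedAddCommGroup F] [InnerProductSpace 𝕜 F]
    {l : Filter ι} {T : ι → E →L[𝕜] F} {S : E →L[𝕜] F} {C : ℝ}
    (hT : ∀ i x y, ‖inner 𝕜 y (T i x)‖ ≤ C * ‖x‖ * ‖y‖) {s : Set E} {t : Set F} (hs : Dense s)
    (ht : Dense t)
    (h : ∀ x ∈ s, ∀ y ∈ t, Tendsto (fun i => inner 𝕜 y (T i x)) l (𝓝 (inner 𝕜 y (S x))))
    (x : E) (y : F) : Tendsto (fun i => inner 𝕜 y (T i x)) l (𝓝 (inner 𝕜 y (S x))) := by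
  have h_left (y : F) (hy : y ∈ t) (x : E) :
      Tendsto (fun i => inner 𝕜 y (T i x)) l (𝓝 (inner 𝕜 y (S x))) := by
    have hF : Equicontinuous fun i => ⇑((innerSL 𝕜 y).comp (T i)) :=
      (NormedSpace.equicontinuous_TFAE _).out 3 1 |>.1 <| by
        exact ⟨C * ‖y‖, fun i x => by simpa [mul_right_comm] using hT i x y⟩
    exact hF.tendsto_of_dense ((innerSL 𝕜 y).comp S).continuous hs (fun x hx => h x hx y hy) x
  have hF : Equicontinuous fun i => ⇑(innerSLFlip 𝕜 (T i x)) :=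
    (NormedSpace.equicontinuous_TFAE _).out 3 1 |>.1 <| by
      exact ⟨C * ‖x‖, fun i y => by simpa using hT i x y⟩
  exact hF.tendsto_of_dense (innerSLFlip 𝕜 (S x)).continuous ht (fun y hy => h_left y hy x) y

set_option linter.unusedSectionVars false

theorem IsWeakDeriv.inner_apply_right {D : H →ₗ.[ℂ] H} {a b : H →L[ℂ] H}
    (hw : IsWeakDeriv D a b) (ξ η : D.domain) :
    ⟪(η : H), b ξ⟫ = ⟪D η, a ξ⟫ - ⟪(η : H), a (D ξ)⟫ := by
  rw [← inner_conj_symm, hw ξ η, map_sub, inner_conj_symm, inner_conj_symm]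

namespace IsStoneGroupOf

variable {D : H →ₗ.[ℂ] H} {U : ℝ → H →L[ℂ] H}

theorem apply_apply (hU : IsStoneGroupOf D U) (s t : ℝ) (x : H) :
    U s (U t x) = U (s + t) x := by
  rw [hU.map_add]; rfl

theorem apply_apply_neg (hU : IsStoneGroupOf D U) (t : ℝ) (x : H) : U t (U (-t) x) = x := by
  rw [hU.apply_apply, add_neg_cancel, hU.map_zero]; rfl

theorem inner_apply_right (hU : IsStoneGroupOf D U) (t : ℝ) (x y : H) :
    ⟪x, U t y⟫ = ⟪U (-t) x, y⟫ := by
  conv_lhs => rw [← hU.apply_apply_neg t x]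
  exact LinearIsometry.inner_map_map ⟨(U t).toLinearMap, hU.isometry t⟩ _ y

theorem apply_mem_domain (hU : IsStoneGroupOf D U) (t : ℝ) (ξ : D.domain) :
    U t (ξ : H) ∈ D.domain := by
  refine hU.mem_domain _ (U t (I • D ξ)) ?_
  have h := ((U t).restrictScalars ℝ).hasFDerivAt.comp_hasDerivAt 0 (hU.hasDerivAt ξ)
  simp only [ContinuousLinearMap.coe_restrictScalars'] at h
  convert h using 2 with s
  rw [Function.comp_apply, hU.apply_apply, hU.apply_apply, add_comm]

theorem hasDerivAt_apply_neg (hU : IsStoneGroupOf D U) (ξ : D.domain) :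
    HasDerivAt (fun s : ℝ => U (-s) (ξ : H)) (-(I • D ξ)) 0 := by
  simpa using HasDerivAt.comp_const_sub (0 : ℝ) 0 (by simpa using hU.hasDerivAt ξ)

end IsStoneGroupOf

section conjAd

variable {D : H →ₗ.[ℂ] H} {U : ℝ → H →L[ℂ] H} {a b : H →L[ℂ] H}

theorem conjAd_zero (hU : IsStoneGroupOf D U) (a : H →L[ℂ] H) : conjAd U 0 a = a := by
  ext x
  simp [conjAd, hU.map_zero]

theorem conjAd_add (hU : IsStoneGroupOf D U) (s t : ℝ) (a : H →L[ℂ] H) :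
    conjAd U (s + t) a = conjAd U s (conjAd U t a) := by
  ext x
  simp only [conjAd, ContinuousLinearMap.comp_apply, hU.apply_apply, neg_add_rev, add_comm]

theorem inner_conjAd_apply (hU : IsStoneGroupOf D U) (t : ℝ) (a : H →L[ℂ] H) (μ ν : H) :
    ⟪ν, conjAd U t a μ⟫ = ⟪U (-t) ν, a (U (-t) μ)⟫ :=
  hU.inner_apply_right t ν _

theorem norm_conjAd_le (hU : IsStoneGroupOf D U) (t : ℝ) (a : H →L[ℂ] H) :
    ‖conjAd U t a‖ ≤ ‖a‖ :=
  ContinuousLinearMap.opNorm_le_bound _ (norm_nonneg a) fun x => by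
    simpa only [conjAd, ContinuousLinearMap.comp_apply, hU.isometry] using a.le_opNorm (U (-t) x)

theorem hasDerivAt_inner_conjAd_apply_zero (hU : IsStoneGroupOf D U) (hw : IsWeakDeriv D a b)
    (ξ η : D.domain) :
    HasDerivAt (fun s : ℝ => ⟪(η : H), conjAd U s a ξ⟫) (I * ⟪(η : H), b ξ⟫) 0 := by
  have ha : HasDerivAt (fun s : ℝ => a (U (-s) ξ)) (a (-(I • D ξ))) 0 :=
    (a.restrictScalars ℝ).hasFDerivAt.comp_hasDerivAt 0 (hU.hasDerivAt_apply_neg ξ)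
  have h := (hU.hasDerivAt_apply_neg η).inner ℂ ha
  simp only [← inner_conjAd_apply hU] at h
  refine h.congr_deriv ?_
  simp only [neg_zero, hU.map_zero, one_apply_eq_self, map_neg,
    map_smul, inner_neg_left, inner_neg_right, inner_smul_left, inner_smul_right, conj_I,
    hw.inner_apply_right]
  ring

theorem hasDerivAt_inner_conjAd_apply (hU : IsStoneGroupOf D U) (hw : IsWeakDeriv D a b)
    (ξ η : D.domain) (t : ℝ) :
    HasDerivAt (fun s : ℝ => ⟪(η : H), conjAd U s a ξ⟫)
      (I * ⟪(η : H), conjAd U t b ξ⟫) t := by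
  have h := HasDerivAt.comp_sub_const t t <| (sub_self t).symm ▸
    hasDerivAt_inner_conjAd_apply_zero hU hw ⟨_, hU.apply_mem_domain (-t) ξ⟩
      ⟨_, hU.apply_mem_domain (-t) η⟩
  simp only [← inner_conjAd_apply hU, ← conjAd_add hU, add_sub_cancel] at h
  exact h

end conjAd

section diffQuot

variable {D : H →ₗ.[ℂ] H} {U : ℝ → H →L[ℂ] H} {a b : H →L[ℂ] H}

theorem norm_inner_conjAd_apply_sub_le_of_mem_domain (hU : IsStoneGroupOf D U)
    (hw : IsWeakDeriv D a b) (ξ η : D.domain) (t : ℝ) :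
    ‖⟪(η : H), conjAd U t a ξ - a ξ⟫‖ ≤ ‖b‖ * ‖(ξ : H)‖ * ‖(η : H)‖ * |t| := by
  have hbound (s : ℝ) : ‖I * ⟪(η : H), conjAd U s b ξ⟫‖ ≤ ‖b‖ * ‖(ξ : H)‖ * ‖(η : H)‖ := by
    rw [norm_mul, norm_I, one_mul]
    calc ‖⟪(η : H), conjAd U s b ξ⟫‖ ≤ ‖(η : H)‖ * (‖b‖ * ‖(ξ : H)‖) :=
          (norm_inner_le_norm _ _).trans <| by
            gcongr; exact (conjAd U s b).le_of_opNorm_le (norm_conjAd_le hU s b) ξ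
      _ = ‖b‖ * ‖(ξ : H)‖ * ‖(η : H)‖ := by ring
  have h := convex_univ.norm_image_sub_le_of_norm_hasDerivWithin_le
    (fun s _ => (hasDerivAt_inner_conjAd_apply hU hw ξ η s).hasDerivWithinAt)
    (fun s _ => hbound s) (Set.mem_univ 0) (Set.mem_univ t)
  rwa [conjAd_zero hU, sub_zero, Real.norm_eq_abs, ← inner_sub_right] at h

theorem norm_inner_conjAd_apply_sub_le (hD : Dense (D.domain : Set H)) (hU : IsStoneGroupOf D U)
    (hw : IsWeakDeriv D a b) (μ ν : H) (t : ℝ) :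
    ‖⟪ν, conjAd U t a μ - a μ⟫‖ ≤ ‖b‖ * ‖μ‖ * ‖ν‖ * |t| := by
  have hclosed : IsClosed {p : H × H |
      ‖⟪p.2, conjAd U t a p.1 - a p.1⟫‖ ≤ ‖b‖ * ‖p.1‖ * ‖p.2‖ * |t|} :=
    isClosed_le (by fun_prop) (by fun_prop)
  exact hclosed.closure_subset_iff.2
    (fun p hp => norm_inner_conjAd_apply_sub_le_of_mem_domain hU hw ⟨_, hp.1⟩ ⟨_, hp.2⟩ t)
    (hD.prod hD (μ, ν))

variable (U a) in
noncomputable def conjAdDiffQuot (t : ℝ) : H →L[ℂ] H :=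
  (I * t)⁻¹ • (conjAd U t a - a)

theorem inner_conjAdDiffQuot_apply (t : ℝ) (μ ν : H) :
    ⟪ν, conjAdDiffQuot U a t μ⟫ = (I * t)⁻¹ * ⟪ν, conjAd U t a μ - a μ⟫ := by
  rw [conjAdDiffQuot, smul_apply, inner_smul_right, sub_apply]

theorem norm_inner_conjAdDiffQuot_apply_le (hD : Dense (D.domain : Set H))
    (hU : IsStoneGroupOf D U) (hw : IsWeakDeriv D a b) (t : ℝ) (μ ν : H) :
    ‖⟪ν, conjAdDiffQuot U a t μ⟫‖ ≤ ‖b‖ * ‖μ‖ * ‖ν‖ := by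
  rw [inner_conjAdDiffQuot_apply, norm_mul, norm_inv, norm_mul, norm_I, one_mul, norm_real,
    Real.norm_eq_abs]
  rcases eq_or_ne t 0 with rfl | ht
  · simp only [abs_zero, inv_zero, zero_mul]
    positivity
  · calc |t|⁻¹ * ‖⟪ν, conjAd U t a μ - a μ⟫‖
        ≤ |t|⁻¹ * (‖b‖ * ‖μ‖ * ‖ν‖ * |t|) := by
          gcongr
          exact norm_inner_conjAd_apply_sub_le hD hU hw μ ν t
      _ = ‖b‖ * ‖μ‖ * ‖ν‖ := by field_simp

theorem hasDerivAt_inner_conjAd_apply_iff (hU : IsStoneGroupOf D U) (μ ν : H) (c : ℂ) :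
    HasDerivAt (fun s : ℝ => ⟪ν, conjAd U s a μ⟫) (I * c) 0 ↔
      Tendsto (fun t : ℝ => ⟪ν, conjAdDiffQuot U a t μ⟫) (𝓝[≠] 0) (𝓝 c) := by
  have hslope : slope (fun s : ℝ => ⟪ν, conjAd U s a μ⟫) 0 =
      fun t => I * ⟪ν, conjAdDiffQuot U a t μ⟫ := by
    ext t
    rw [slope_def_module, inner_conjAdDiffQuot_apply, conjAd_zero hU, inner_sub_right, sub_zero,
      real_smul, ofReal_inv, mul_inv, mul_assoc, mul_inv_cancel_left₀ I_ne_zero]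
  rw [hasDerivAt_iff_tendsto_slope, hslope]
  exact tendsto_const_smul_iff₀ I_ne_zero

end diffQuot

/-- If `a` is weakly `D`-differentiable then `(α_t(a) − a)/(it) → wD(a)` in the weak
operator topology as `t → 0`; in particular `t ↦ ⟨α_t(a) μ, ν⟩` is differentiable at `0`
with derivative `i ⟨wD(a) μ, ν⟩`. -/
theorem weakDeriv_is_weak_operator_limit
    (D : H →ₗ.[ℂ] H) (hD : IsSelfAdjoint D)
    (U : ℝ → H →L[ℂ] H) (hU : IsStoneGroupOf D U)
    (a b : H →L[ℂ] H) (hw : IsWeakDeriv D a b) :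
    (∀ μ ν : H,
      Tendsto (fun t : ℝ => (Complex.I * (t : ℂ))⁻¹ * ⟪ν, (conjAd U t a) μ - a μ⟫)
        (𝓝[≠] (0 : ℝ)) (𝓝 ⟪ν, b μ⟫)) ∧
    ∀ μ ν : H,
      HasDerivAt (fun t : ℝ => ⟪ν, (conjAd U t a) μ⟫) (Complex.I * ⟪ν, b μ⟫) 0 := by
  have hdense : Dense (D.domain : Set H) := hD.dense_domain
  have hlim (μ ν : H) :
      Tendsto (fun t : ℝ => ⟪ν, conjAdDiffQuot U a t μ⟫) (𝓝[≠] 0) (𝓝 ⟪ν, b μ⟫) :=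
    ContinuousLinearMap.tendsto_inner_of_dense
      (fun t μ ν => norm_inner_conjAdDiffQuot_apply_le hdense hU hw t μ ν) hdense hdense
      (fun ξ hξ η hη => (hasDerivAt_inner_conjAd_apply_iff hU ξ η _).1 <|
        hasDerivAt_inner_conjAd_apply_zero hU hw ⟨ξ, hξ⟩ ⟨η, hη⟩) μ ν
  refine ⟨fun μ ν => ?_, fun μ ν => (hasDerivAt_inner_conjAd_apply_iff hU μ ν _).2 (hlim μ ν)⟩
  simpa only [inner_conjAdDiffQuot_apply] using hlim μ ν
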